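/- If (𝒫, ℛ) is a proper point-ray collection, then P_I is contained in C̄(𝒫, ℛ) := x̄ + cone({p − x̄ : p ∈ 𝒫} ∪ ℛ), the polyhedral cone with apex x̄ generated by the directions to the points of 𝒫 together with the rays of ℛ. -/

import Mathlib

/- Common geometric definitions: polyhedra, faces, edges, vertices, skeleton,
   point-ray collections obtained by intersecting edges with the boundary of a
   convex set, the feasibility system for cut coefficients, and mixed-integer
   points. -/

open Matrix Set Pointwise

noncomputable section

/-- A polyhedron: the intersection of finitely many halfspaces. -/
def IsPolyhedron {n : ℕ} (C : Set (Fin n → ℝ)) : Prop :=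
  ∃ (m : ℕ) (A : Fin m → Fin n → ℝ) (b : Fin m → ℝ), C = {x | ∀ i, b i ≤ A i ⬝ᵥ x}

/-- A rational polyhedron: all defining data can be chosen rational. -/
def IsRationalPolyhedron {n : ℕ} (C : Set (Fin n → ℝ)) : Prop :=
  ∃ (m : ℕ) (A : Fin m → Fin n → ℚ) (b : Fin m → ℚ),
    C = {x | ∀ i, (b i : ℝ) ≤ (fun j => (A i j : ℝ)) ⬝ᵥ x}

/-- A (nonempty) face of a convex set, in the sense of extreme subsets. -/
def IsFaceOf {n : ℕ} (C F : Set (Fin n → ℝ)) : Prop :=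
  F.Nonempty ∧ IsExtreme ℝ C F

/-- An edge: a one-dimensional face. -/
def IsEdgeOf {n : ℕ} (C e : Set (Fin n → ℝ)) : Prop :=
  IsFaceOf C e ∧ Module.finrank ℝ (affineSpan ℝ e).direction = 1

/-- A vertex: an extreme point. -/
def IsVertexOf {n : ℕ} (C : Set (Fin n → ℝ)) (v : Fin n → ℝ) : Prop :=
  v ∈ Set.extremePoints ℝ C

/-- The skeleton of `C`: the union of its one-dimensional faces. -/
def skeleton {n : ℕ} (C : Set (Fin n → ℝ)) : Set (Fin n → ℝ) :=
  ⋃₀ {e | IsEdgeOf C e}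

/-- The intersection points obtained from intersecting the edges of `C` with
the boundary of `S`. -/
def intersectionPoints {n : ℕ} (C S : Set (Fin n → ℝ)) : Set (Fin n → ℝ) :=
  {p | p ∈ frontier S ∧ ∃ e, IsEdgeOf C e ∧ p ∈ e}

/-- `r` is an unbounded direction of the edge `e`. -/
def IsUnbDirOf {n : ℕ} (e : Set (Fin n → ℝ)) (r : Fin n → ℝ) : Prop :=
  r ≠ 0 ∧ ∃ x ∈ e, ∀ t : ℝ, 0 ≤ t → x + t • r ∈ e

/-- The rays (unbounded edge directions) of `C` whose edges do not intersect
the boundary of `S`. -/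
def missedRays {n : ℕ} (C S : Set (Fin n → ℝ)) : Set (Fin n → ℝ) :=
  {r | ∃ e, IsEdgeOf C e ∧ e ∩ frontier S = ∅ ∧ IsUnbDirOf e r}

/-- `(α, β)` is feasible for the point-ray collection `(Ps, Rs)`:
`pᵀα ≥ β` for all points `p` and `rᵀα ≥ 0` for all rays `r`. -/
def FeasCut {n : ℕ} (Ps Rs : Set (Fin n → ℝ)) (α : Fin n → ℝ) (β : ℝ) : Prop :=
  (∀ p ∈ Ps, β ≤ p ⬝ᵥ α) ∧ ∀ r ∈ Rs, 0 ≤ r ⬝ᵥ α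

/-- The mixed-integer points `P_I` of `P`. -/
def mixedIntegerPoints {n : ℕ} (P : Set (Fin n → ℝ)) (I : Set (Fin n)) :
    Set (Fin n → ℝ) :=
  {x ∈ P | ∀ j ∈ I, ∃ z : ℤ, x j = (z : ℝ)}

/-- The convex cone generated by a set (all finite nonnegative combinations). -/
def coneGen {n : ℕ} (X : Set (Fin n → ℝ)) : Set (Fin n → ℝ) :=
  {y | ∃ (k : ℕ) (c : Fin k → ℝ) (w : Fin k → Fin n → ℝ),
    (∀ i, 0 ≤ c i) ∧ (∀ i, w i ∈ X) ∧ y = ∑ i, c i • w i}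

/-- `C̄(𝒫, ℛ) = x̄ + cone({p − x̄ : p ∈ 𝒫} ∪ ℛ)`. -/
def pointRayCone {n : ℕ} (xbar : Fin n → ℝ) (Ps Rs : Set (Fin n → ℝ)) :
    Set (Fin n → ℝ) :=
  (fun y => xbar + y) '' coneGen ((fun p => p - xbar) '' Ps ∪ Rs)

/- ========== auxiliary lemmas ========== -/

section AuxLemmas

variable {N : ℕ}

lemma coneGen_zero_mem (X : Set (Fin N → ℝ)) : 0 ∈ coneGen X :=
  ⟨0, fun i => i.elim0, fun i => i.elim0, fun i => i.elim0, fun i => i.elim0, by simp⟩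

lemma coneGen_mono {X Y : Set (Fin N → ℝ)} (h : X ⊆ Y) : coneGen X ⊆ coneGen Y := by
  rintro y ⟨k, c, w, hc, hw, rfl⟩
  exact ⟨k, c, w, hc, fun i => h (hw i), rfl⟩

lemma mem_coneGen_self {X : Set (Fin N → ℝ)} {x : Fin N → ℝ} (hx : x ∈ X) : x ∈ coneGen X :=
  ⟨1, fun _ => 1, fun _ => x, fun _ => zero_le_one, fun _ => hx, by simp⟩

lemma coneGen_add_mem {X : Set (Fin N → ℝ)} {x y : Fin N → ℝ}
    (hx : x ∈ coneGen X) (hy : y ∈ coneGen X) : x + y ∈ coneGen X := by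
  obtain ⟨k, c, w, hc, hw, rfl⟩ := hx
  obtain ⟨k', c', w', hc', hw', rfl⟩ := hy
  refine ⟨k + k', Fin.append c c', Fin.append w w', ?_, ?_, ?_⟩
  · intro i
    induction i using Fin.addCases with
    | left i => simpa using hc i
    | right i => simpa using hc' i
  · intro i
    induction i using Fin.addCases with
    | left i => simpa using hw i
    | right i => simpa using hw' i
  · rw [Fin.sum_univ_add]
    simp

lemma coneGen_smul_mem {X : Set (Fin N → ℝ)} {a : ℝ} (ha : 0 ≤ a) {x : Fin N → ℝ}
    (hx : x ∈ coneGen X) : a • x ∈ coneGen X := by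
  obtain ⟨k, c, w, hc, hw, rfl⟩ := hx
  refine ⟨k, fun i => a * c i, w, fun i => mul_nonneg ha (hc i), hw, ?_⟩
  rw [Finset.smul_sum]
  simp [smul_smul]

lemma coneGen_convex (X : Set (Fin N → ℝ)) : Convex ℝ (coneGen X) := by
  intro x hx y hy a b ha hb _
  exact coneGen_add_mem (coneGen_smul_mem ha hx) (coneGen_smul_mem hb hy)

lemma convexHull_subset_coneGen {X : Set (Fin N → ℝ)} :
    convexHull ℝ X ⊆ coneGen X :=
  convexHull_min (fun _ hx => mem_coneGen_self hx) (coneGen_convex X)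

lemma exists_linIndep_rep :
    ∀ (k : ℕ) (c : Fin k → ℝ) (w : Fin k → Fin N → ℝ), (∀ i, 0 ≤ c i) →
    ∃ (m : ℕ) (c' : Fin m → ℝ) (w' : Fin m → Fin N → ℝ),
      (∀ i, 0 ≤ c' i) ∧ (∀ i, w' i ∈ Set.range w) ∧
      (∑ i, c' i • w' i = ∑ i, c i • w i) ∧ LinearIndependent ℝ w' := by
  intro k
  induction k with
  | zero =>
    intro c w _
    exact ⟨0, c, w, fun i => i.elim0, fun i => i.elim0, rfl, linearIndependent_empty_type⟩
  | succ m ih =>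
    intro c w hc
    by_cases hli : LinearIndependent ℝ w
    · exact ⟨m + 1, c, w, hc, fun i => ⟨i, rfl⟩, rfl, hli⟩
    obtain ⟨g, hg0, i₀, hgi₀⟩ := Fintype.not_linearIndependent_iff.mp hli
    obtain ⟨d, hd0, hdpos⟩ : ∃ d : Fin (m + 1) → ℝ,
        (∑ i, d i • w i = 0) ∧ ∃ i, 0 < d i := by
      rcases hgi₀.lt_or_gt with h | h
      · refine ⟨-g, ?_, i₀, by simpa using h⟩
        simp [neg_smul, hg0]
      · exact ⟨g, hg0, i₀, h⟩
    obtain ⟨ip, hip⟩ := hdpos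
    set F : Finset (Fin (m + 1)) := Finset.univ.filter (fun i => 0 < d i) with hF
    have hFne : F.Nonempty := ⟨ip, by simp [hF, hip]⟩
    obtain ⟨j₀, hj₀F, hmin⟩ := F.exists_min_image (fun i => c i / d i) hFne
    have hdj₀ : 0 < d j₀ := by simpa [hF] using hj₀F
    set τ : ℝ := c j₀ / d j₀ with hτ
    have hτ0 : 0 ≤ τ := div_nonneg (hc j₀) hdj₀.le
    set c' : Fin (m + 1) → ℝ := fun i => c i - τ * d i with hc'
    have hc'0 : ∀ i, 0 ≤ c' i := by
      intro i
      rcases le_or_gt (d i) 0 with h | h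
      · have h1 : τ * d i ≤ 0 := mul_nonpos_iff.mpr (Or.inl ⟨hτ0, h⟩)
        have h2 := hc i
        simp only [hc']
        linarith
      · have hiF : i ∈ F := by simp [hF, h]
        have h3 := hmin i hiF
        have h4 : τ * d i ≤ c i := by
          rw [hτ] at h3 ⊢
          exact (le_div_iff₀ h).mp h3
        simp only [hc']
        linarith
    have hc'j₀ : c' j₀ = 0 := by
      simp only [hc', hτ]
      field_simp
      ring
    have hsum' : ∑ i, c' i • w i = ∑ i, c i • w i := by
      simp only [hc', sub_smul, Finset.sum_sub_distrib, mul_smul]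
      rw [← Finset.smul_sum, hd0, smul_zero, sub_zero]
    obtain ⟨m', c₂, w₂, h0, hrange, hsum2, hli2⟩ :=
      ih (fun j => c' (j₀.succAbove j)) (fun j => w (j₀.succAbove j))
        (fun j => hc'0 _)
    refine ⟨m', c₂, w₂, h0, ?_, ?_, hli2⟩
    · intro i
      obtain ⟨j, hj⟩ := hrange i
      exact ⟨j₀.succAbove j, hj⟩
    · rw [hsum2, ← hsum']
      rw [Fin.sum_univ_succAbove (fun i => c' i • w i) j₀, hc'j₀, zero_smul, zero_add]

lemma coneGen_linIndep_isClosed {t : Set (Fin N → ℝ)} (htf : t.Finite)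
    (hli : LinearIndependent ℝ ((↑) : t → (Fin N → ℝ))) : IsClosed (coneGen t) := by
  haveI : Fintype t := htf.fintype
  let T : (t → ℝ) →ₗ[ℝ] (Fin N → ℝ) :=
    { toFun := fun c => ∑ v : t, c v • (v : Fin N → ℝ)
      map_add' := by
        intro a b
        simp [add_smul, Finset.sum_add_distrib]
      map_smul' := by
        intro a b
        simp [Finset.smul_sum, smul_smul] }
  have hker : LinearMap.ker T = ⊥ := by
    rw [LinearMap.ker_eq_bot']
    intro c hc
    funext v
    exact Fintype.linearIndependent_iff.mp hli c hc v
  have he := LinearMap.isClosedEmbedding_of_injective hker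
  have himg : coneGen t = T '' {c | ∀ v, 0 ≤ c v} := by
    apply Set.Subset.antisymm
    · rintro y ⟨k, c, w, hc, hw, rfl⟩
      classical
      set g : Fin k → t := fun i => ⟨w i, hw i⟩ with hg
      refine ⟨fun v => ∑ i ∈ Finset.univ.filter (fun i => g i = v), c i,
        fun v => Finset.sum_nonneg fun i _ => hc i, ?_⟩
      show ∑ v : t, (∑ i ∈ Finset.univ.filter (fun i => g i = v), c i) • (v : Fin N → ℝ) = _
      rw [← Finset.sum_fiberwise Finset.univ g (fun i => c i • w i)]
      refine Finset.sum_congr rfl fun v _ => ?_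
      rw [Finset.sum_smul]
      refine Finset.sum_congr rfl fun i hi => ?_
      have hgi : g i = v := (Finset.mem_filter.mp hi).2
      rw [← hgi]
    · rintro y ⟨c, hc, rfl⟩
      let e := (Fintype.equivFin t).symm
      refine ⟨Fintype.card t, fun i => c (e i), fun i => (e i : Fin N → ℝ),
        fun i => hc (e i), fun i => (e i).2, ?_⟩
      show T c = _
      exact (Equiv.sum_comp e (fun v => c v • (v : Fin N → ℝ))).symm
  rw [himg]
  apply he.isClosedMap
  have horth : {c : t → ℝ | ∀ v, 0 ≤ c v} = ⋂ v, {c : t → ℝ | 0 ≤ c v} := by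
    ext c; simp
  rw [horth]
  exact isClosed_iInter fun v => isClosed_le continuous_const (continuous_apply v)

lemma coneGen_isClosed {X : Set (Fin N → ℝ)} (hX : X.Finite) : IsClosed (coneGen X) := by
  have h1 : coneGen X =
      ⋃ t ∈ {t : Set (Fin N → ℝ) | t ⊆ X ∧ LinearIndependent ℝ ((↑) : t → (Fin N → ℝ))},
        coneGen t := by
    apply Set.Subset.antisymm
    · rintro y ⟨k, c, w, hc, hw, rfl⟩
      obtain ⟨m, c', w', h0, hrange, hsum, hli⟩ := exists_linIndep_rep k c w hc
      have hmemset : Set.range w' ∈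
          {t : Set (Fin N → ℝ) | t ⊆ X ∧ LinearIndependent ℝ ((↑) : t → (Fin N → ℝ))} := by
        refine ⟨fun x hx => ?_, hli.linearIndepOn_id⟩
        obtain ⟨i, rfl⟩ := hx
        obtain ⟨j, hj⟩ := hrange i
        exact hj ▸ hw j
      exact Set.mem_biUnion hmemset ⟨m, c', w', h0, fun i => ⟨i, rfl⟩, hsum.symm⟩
    · exact Set.iUnion₂_subset fun t ht => coneGen_mono ht.1
  rw [h1]
  apply Set.Finite.isClosed_biUnion
  · exact (hX.finite_subsets).subset fun t ht => ht.1
  · exact fun t ht => coneGen_linIndep_isClosed (hX.subset ht.1) ht.2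

lemma recession_mem {C : Set (Fin N → ℝ)} (hCc : IsClosed C) (hCconv : Convex ℝ C)
    {x r : Fin N → ℝ} (hx : ∀ s : ℝ, 0 ≤ s → x + s • r ∈ C) {y : Fin N → ℝ} (hy : y ∈ C)
    {t : ℝ} (ht : 0 ≤ t) : y + t • r ∈ C := by
  have key : ∀ n : ℕ, (1 - 1 / (n + 1 : ℝ)) • y + (1 / (n + 1 : ℝ)) • x + t • r ∈ C := by
    intro n
    have hε : (0 : ℝ) < 1 / (n + 1 : ℝ) := by positivity
    have hε1 : (1 : ℝ) / (n + 1 : ℝ) ≤ 1 := by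
      rw [div_le_one (by positivity)]
      linarith [Nat.cast_nonneg (α := ℝ) n]
    have hmem := hCconv hy (hx (t / (1 / (n + 1 : ℝ))) (by positivity))
      (by linarith : (0:ℝ) ≤ 1 - 1 / (n + 1 : ℝ)) hε.le (by ring)
    have heq : (1 - 1 / (n + 1 : ℝ)) • y + (1 / (n + 1 : ℝ)) • (x + (t / (1 / (n + 1 : ℝ))) • r)
        = (1 - 1 / (n + 1 : ℝ)) • y + (1 / (n + 1 : ℝ)) • x + t • r := by
      rw [smul_add, smul_smul, ← add_assoc]
      congr 2
      field_simp
    rwa [heq] at hmem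
  have hlim : Filter.Tendsto
      (fun n : ℕ => (1 - 1 / (n + 1 : ℝ)) • y + (1 / (n + 1 : ℝ)) • x + t • r)
      Filter.atTop (nhds (y + t • r)) := by
    have h0 : Filter.Tendsto (fun n : ℕ => 1 / (n + 1 : ℝ)) Filter.atTop (nhds 0) :=
      tendsto_one_div_add_atTop_nhds_zero_nat
    have h1 : Filter.Tendsto (fun n : ℕ => (1 - 1 / (n + 1 : ℝ)) • y)
        Filter.atTop (nhds ((1 - (0:ℝ)) • y)) :=
      (Filter.Tendsto.sub tendsto_const_nhds h0).smul_const y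
    have h2 : Filter.Tendsto (fun n : ℕ => (1 / (n + 1 : ℝ)) • x)
        Filter.atTop (nhds ((0:ℝ) • x)) := h0.smul_const x
    have h3 := (h1.add h2).add (tendsto_const_nhds (x := t • r))
    simpa using h3
  exact hCc.mem_of_tendsto hlim (Filter.Eventually.of_forall key)

lemma extreme_convex_comb {C : Set (Fin N → ℝ)} (hCconv : Convex ℝ C) {x : Fin N → ℝ}
    (hx : x ∈ Set.extremePoints ℝ C) {ι : Type*} {t : Finset ι} {w : ι → ℝ}
    {p : ι → Fin N → ℝ} (hw : ∀ i ∈ t, 0 ≤ w i) (hw1 : ∑ i ∈ t, w i = 1)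
    (hp : ∀ i ∈ t, p i ∈ C) (hsum : ∑ i ∈ t, w i • p i = x) :
    ∀ i ∈ t, 0 < w i → p i = x := by
  classical
  intro i hi hwi
  have hle1 : w i ≤ 1 := hw1 ▸ Finset.single_le_sum hw hi
  rcases eq_or_lt_of_le hle1 with heq | hlt
  · -- w i = 1, all other weights vanish
    have hrest : ∑ j ∈ t.erase i, w j = 0 := by
      have := Finset.add_sum_erase t w hi
      rw [hw1] at this
      linarith [this, heq]
    have hz : ∀ j ∈ t.erase i, w j = 0 := by
      intro j hj
      have := (Finset.sum_eq_zero_iff_of_nonneg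
        (fun j hj => hw j (Finset.mem_of_mem_erase hj))).mp hrest
      exact this j hj
    have : x = w i • p i := by
      rw [← hsum, ← Finset.add_sum_erase t _ hi]
      rw [Finset.sum_eq_zero (fun j hj => by rw [hz j hj, zero_smul]), add_zero]
    rw [this, heq, one_smul]
  · -- 0 < w i < 1
    set W : ℝ := 1 - w i with hW
    have hWpos : 0 < W := by simp only [hW]; linarith
    set q : Fin N → ℝ := W⁻¹ • ∑ j ∈ t.erase i, w j • p j with hq
    have hrestW : ∑ j ∈ t.erase i, w j = W := by
      have := Finset.add_sum_erase t w hi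
      rw [hw1] at this
      simp only [hW]; linarith
    have hqC : q ∈ C := by
      have := hCconv.sum_mem (t := t.erase i) (w := fun j => W⁻¹ * w j)
        (fun j hj => mul_nonneg (inv_nonneg.mpr hWpos.le) (hw j (Finset.mem_of_mem_erase hj)))
        (by rw [← Finset.mul_sum, hrestW, inv_mul_cancel₀ hWpos.ne'])
        (fun j hj => hp j (Finset.mem_of_mem_erase hj))
      simpa [hq, Finset.smul_sum, mul_smul] using this
    have hseg : x ∈ openSegment ℝ (p i) q := by
      refine ⟨w i, W, hwi, hWpos, by simp only [hW]; ring, ?_⟩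
      have hWq : W • q = ∑ j ∈ t.erase i, w j • p j := by
        rw [hq, smul_smul, mul_inv_cancel₀ hWpos.ne', one_smul]
      rw [hWq, ← hsum]
      exact Finset.add_sum_erase t (fun j => w j • p j) hi
    exact ((mem_extremePoints.mp hx).2 (p i) (hp i hi) q hqC hseg).1

end AuxLemmas


/-- Lemma: `P_I ⊆ C̄(𝒫, ℛ)` for a proper collection. Let `P`
be a full-dimensional pointed rational polyhedron, `S` a `P_I`-free closed
convex set, and `x̄` a vertex of `P` in the interior of `S`. Let `(Ps, Rs)` be
a point-ray collection (finite sets of points on `bd S` and of rays) obtained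
from intersecting the edges of a relaxation `C` of `P` with `bd S`. If
`(Ps, Rs)` is proper, then `P_I ⊆ x̄ + cone({p − x̄ : p ∈ Ps} ∪ Rs)`. -/
theorem PI_subset_pointRayCone
    {n m : ℕ} (A : Fin m → Fin n → ℚ) (b : Fin m → ℚ) (I : Set (Fin n))
    (P : Set (Fin n → ℝ))
    (hP : P = {x | (∀ i, (b i : ℝ) ≤ (fun j => (A i j : ℝ)) ⬝ᵥ x) ∧ ∀ j, 0 ≤ x j})
    (hPfull : (interior P).Nonempty)
    (hPpointed : ∃ v, IsVertexOf P v)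
    (S : Set (Fin n → ℝ)) (hSclosed : IsClosed S) (hSconv : Convex ℝ S)
    (hSfree : interior S ∩ mixedIntegerPoints P I = ∅)
    (xbar : Fin n → ℝ) (hxbarV : IsVertexOf P xbar) (hxbarS : xbar ∈ interior S)
    (C : Set (Fin n → ℝ)) (hCpoly : IsPolyhedron C) (hPC : P ⊆ C)
    (hxbarC : IsVertexOf C xbar) (hxbarSk : xbar ∈ skeleton C)
    (Ps Rs : Set (Fin n → ℝ)) (hPsfin : Ps.Finite) (hRsfin : Rs.Finite)
    (hPs : Ps ⊆ intersectionPoints C S) (hRs : Rs ⊆ missedRays C S)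
    (hproper : ∀ (α : Fin n → ℝ) (β : ℝ), FeasCut Ps Rs α β →
      (∃ v, IsVertexOf C v ∧
        v ∈ connectedComponentIn (skeleton C ∩ interior S) xbar ∧ v ⬝ᵥ α < β) →
      ∀ x ∈ mixedIntegerPoints P I, β ≤ x ⬝ᵥ α) :
    mixedIntegerPoints P I ⊆ pointRayCone xbar Ps Rs := by
  intro xhat hxhat
  by_contra hnot
  -- C is closed and convex
  obtain ⟨m', A', b', hC⟩ := hCpoly
  have hCclosed : IsClosed C := by
    rw [hC]
    have : {x : Fin n → ℝ | ∀ i, b' i ≤ A' i ⬝ᵥ x} = ⋂ i, {x | b' i ≤ A' i ⬝ᵥ x} := by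
      ext x; simp
    rw [this]
    refine isClosed_iInter fun i => isClosed_le continuous_const ?_
    exact continuous_finset_sum _ fun j _ => continuous_const.mul (continuous_apply j)
  have hCconv : Convex ℝ C := by
    rw [hC]
    have : {x : Fin n → ℝ | ∀ i, b' i ≤ A' i ⬝ᵥ x} = ⋂ i, {x | b' i ≤ A' i ⬝ᵥ x} := by
      ext x; simp
    rw [this]
    refine convex_iInter fun i => convex_halfSpace_ge ?_ (b' i)
    constructor
    · intro x y; simp [dotProduct_add]
    · intro c x; simp [dotProduct_smul, smul_eq_mul]
  have hxbarP : xbar ∈ P := hxbarV.1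
  have hxbarInC : xbar ∈ C := hPC hxbarP
  -- membership of xbar in the connected component
  have hxbarComp : xbar ∈ connectedComponentIn (skeleton C ∩ interior S) xbar :=
    mem_connectedComponentIn ⟨hxbarSk, hxbarS⟩
  -- rays are recession directions of C
  have hrec : ∀ r ∈ Rs, ∀ y ∈ C, ∀ t : ℝ, 0 ≤ t → y + t • r ∈ C := by
    intro r hr y hy t ht
    obtain ⟨e, he, _, _, x, hxe, hmove⟩ := hRs hr
    have heC : e ⊆ C := he.1.2.1
    exact recession_mem hCclosed hCconv (fun s hs => heC (hmove s hs)) hy ht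
  -- adding a nonnegative combination of rays stays in C
  have hsumRays : ∀ (k : ℕ) (cc : Fin k → ℝ) (rr : Fin k → Fin n → ℝ),
      (∀ i, 0 ≤ cc i) → (∀ i, rr i ∈ Rs) → ∀ y ∈ C, y + ∑ i, cc i • rr i ∈ C := by
    intro k
    induction k with
    | zero => intro cc rr _ _ y hy; simpa using hy
    | succ k ih =>
      intro cc rr hcc hrr y hy
      have h1 : y + cc 0 • rr 0 ∈ C := hrec (rr 0) (hrr 0) y hy (cc 0) (hcc 0)
      have h2 := ih (fun i => cc i.succ) (fun i => rr i.succ)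
        (fun i => hcc i.succ) (fun i => hrr i.succ) _ h1
      rw [Fin.sum_univ_succ, ← add_assoc]
      exact h2
  -- every point of Ps lies in C
  have hPsC : ∀ p ∈ Ps, p ∈ C := by
    intro p hp
    obtain ⟨_, e, he, hpe⟩ := hPs hp
    exact he.1.2.1 hpe
  rcases Set.eq_empty_or_nonempty Ps with hPsE | hPsne
  · -- trivial case: no points, so `(0, 1)` shows `P_I = ∅`
    have h := hproper 0 1 ⟨by simp [hPsE], fun r _ => by simp⟩
      ⟨xbar, hxbarC, hxbarComp, by simp⟩ xhat hxhat
    simp at h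
    linarith
  -- main case
  set u : Fin n → ℝ := xhat - xbar with hu_def
  set G : Set (Fin n → ℝ) := (fun p => p - xbar) '' Ps with hG
  have hu : u ∉ coneGen (G ∪ Rs) := by
    intro h
    exact hnot ⟨u, h, by simp [hu_def]⟩
  set D : Set (Fin n → ℝ) := convexHull ℝ G + coneGen Rs with hD
  have hDconv : Convex ℝ D := (convex_convexHull ℝ G).add (coneGen_convex Rs)
  have hDclosed : IsClosed D :=
    IsClosed.add_left_of_isCompact (coneGen_isClosed hRsfin)
      ((hPsfin.image _).isCompact_convexHull (𝕜 := ℝ))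
  have hDsubK : D ⊆ coneGen (G ∪ Rs) := by
    rintro d hd
    obtain ⟨q, hq, s, hs, rfl⟩ := hd
    exact coneGen_add_mem
      (convexHull_subset_coneGen ((convexHull_mono Set.subset_union_left) hq))
      (coneGen_mono Set.subset_union_right hs)
  -- 0 is not in D (by extremality of xbar)
  have h0D : (0 : Fin n → ℝ) ∉ D := by
    intro h0
    obtain ⟨q', hq', s, hsmem, hqs0⟩ := h0
    rw [convexHull_eq] at hq'
    obtain ⟨ι, t, wei, z, hw0, hw1, hzG, hcent⟩ := hq'
    rw [Finset.centerMass_eq_of_sum_1 _ _ hw1] at hcent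
    set pp : ι → Fin n → ℝ := fun i => z i + xbar with hpp_def
    have hppPs : ∀ i ∈ t, pp i ∈ Ps := by
      intro i hi
      obtain ⟨p, hpPs, hpe⟩ := hzG i hi
      have : pp i = p := by simp [hpp_def, ← hpe]
      rwa [this]
    have hppC : ∀ i ∈ t, pp i ∈ C := fun i hi => hPsC _ (hppPs i hi)
    obtain ⟨k, cc, rr, hcc, hrr, hs_eq⟩ := hsmem
    set qq : Fin n → ℝ := ∑ i ∈ t, wei i • pp i with hqq_def
    have hqqC : qq ∈ C := hCconv.sum_mem hw0 hw1 hppC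
    have hq'eq : q' = qq - xbar := by
      rw [← hcent, hqq_def]
      have : ∀ i ∈ t, wei i • z i = wei i • pp i - wei i • xbar := by
        intro i hi
        rw [hpp_def]
        simp [smul_add]
      rw [Finset.sum_congr rfl this, Finset.sum_sub_distrib, ← Finset.sum_smul, hw1, one_smul]
    have hxbar_eq : xbar = qq + s := by
      have : (qq - xbar) + s = 0 := hq'eq ▸ hqs0
      have h' := congrArg (fun y => y + xbar) this
      simp only [zero_add] at h'
      rw [← h']
      abel
    have hxps : xbar + s ∈ C := by
      rw [hs_eq]
      exact hsumRays k cc rr hcc hrr xbar hxbarInC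
    have hseg : xbar ∈ openSegment ℝ qq (xbar + s) := by
      refine ⟨1/2, 1/2, by norm_num, by norm_num, by norm_num, ?_⟩
      rw [hxbar_eq]
      module
    have hext := (mem_extremePoints.mp hxbarC).2 qq hqqC (xbar + s) hxps hseg
    have hqq_xbar : qq = xbar := hext.1
    -- xbar is a convex combination of points of Ps
    have hcomb : ∑ i ∈ t, wei i • pp i = xbar := by rw [← hqq_def, hqq_xbar]
    obtain ⟨i, hi, hwine⟩ : ∃ i ∈ t, wei i ≠ 0 := by
      by_contra hall
      push_neg at hall
      rw [Finset.sum_eq_zero (fun i hi => hall i hi)] at hw1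
      norm_num at hw1
    have hwipos : 0 < wei i := lt_of_le_of_ne (hw0 i hi) (Ne.symm hwine)
    have hpix : pp i = xbar :=
      extreme_convex_comb hCconv hxbarC hw0 hw1 hppC hcomb i hi hwipos
    have hfront : pp i ∈ frontier S := (hPs (hppPs i hi)).1
    have : pp i ∉ interior S := fun hin => hfront.2 hin
    exact this (hpix ▸ hxbarS)
  -- Q is the segment from 0 to u
  set Q : Set (Fin n → ℝ) := convexHull ℝ {0, u} with hQ
  have hQconv : Convex ℝ Q := convex_convexHull ℝ _
  have hQcomp : IsCompact Q := (Set.toFinite {0, u}).isCompact_convexHull (𝕜 := ℝ)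
  have hdisj : Disjoint Q D := by
    rw [Set.disjoint_left]
    intro q hqQ hqD
    rw [hQ, convexHull_pair] at hqQ
    obtain ⟨a, b2, _, hb2, _, habq⟩ := hqQ
    have hqb : q = b2 • u := by rw [← habq]; simp
    rcases eq_or_lt_of_le hb2 with hb0 | hbpos
    · apply h0D
      rwa [show (0 : Fin n → ℝ) = q by rw [hqb, ← hb0, zero_smul]]
    · apply hu
      have : u = b2⁻¹ • q := by
        rw [hqb, smul_smul, inv_mul_cancel₀ hbpos.ne', one_smul]
      rw [this]
      exact coneGen_smul_mem (inv_nonneg.mpr hbpos.le) (hDsubK hqD)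
  -- separate Q from D
  obtain ⟨f, c₁, c₂, hfQ, hc12, hfD⟩ :=
    geometric_hahn_banach_compact_closed hQconv hQcomp hDconv hDclosed hdisj
  set α : Fin n → ℝ := fun j => f (Pi.single j (1:ℝ)) with hα
  have hfα : ∀ y : Fin n → ℝ, f y = y ⬝ᵥ α := by
    intro y
    have hy : y = ∑ j, Pi.single j (y j) := (Finset.univ_sum_single y).symm
    have h1 : ∀ j, f (Pi.single j (y j)) = y j * α j := by
      intro j
      have hps : Pi.single j (y j) = y j • (Pi.single j (1:ℝ) : Fin n → ℝ) := by
        funext i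
        by_cases h : i = j <;> simp [Pi.single_apply, h]
      rw [hps, _root_.map_smul, smul_eq_mul, hα]
    calc f y = f (∑ j, Pi.single j (y j)) := by rw [← hy]
      _ = ∑ j, f (Pi.single j (y j)) := map_sum f _ _
      _ = ∑ j, y j * α j := Finset.sum_congr rfl fun j _ => h1 j
      _ = y ⬝ᵥ α := rfl
  have h0Q : (0 : Fin n → ℝ) ∈ Q := subset_convexHull ℝ _ (by simp)
  have huQ : u ∈ Q := subset_convexHull ℝ _ (by simp)
  have hc₂pos : 0 < c₂ := by
    have := hfQ 0 h0Q
    rw [map_zero] at this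
    linarith
  set β : ℝ := xbar ⬝ᵥ α + c₂ with hβ
  -- set membership of p - xbar in D
  have hGD : ∀ p ∈ Ps, p - xbar ∈ D := by
    intro p hp
    have h1 : p - xbar ∈ convexHull ℝ G :=
      subset_convexHull ℝ G ⟨p, hp, rfl⟩
    have := Set.add_mem_add h1 (coneGen_zero_mem Rs)
    rwa [add_zero] at this
  have hfeas : FeasCut Ps Rs α β := by
    constructor
    · intro p hp
      have h1 := hfD _ (hGD p hp)
      rw [hfα, sub_dotProduct] at h1
      rw [hβ]
      linarith
    · intro r hr
      by_contra hneg
      push_neg at hneg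
      obtain ⟨p₀, hp₀⟩ := hPsne
      have hd₀ : p₀ - xbar ∈ D := hGD p₀ hp₀
      have hfd₀ : c₂ < f (p₀ - xbar) := hfD _ hd₀
      set tt : ℝ := (f (p₀ - xbar) - c₂ + 1) / (-(r ⬝ᵥ α)) with htt
      have httpos : 0 < tt := by
        apply div_pos (by linarith) (by linarith)
      have hmem : (p₀ - xbar) + tt • r ∈ D := by
        refine Set.add_mem_add ?_ ?_
        · exact subset_convexHull ℝ G ⟨p₀, hp₀, rfl⟩
        · exact coneGen_smul_mem httpos.le (mem_coneGen_self hr)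
      have h2 := hfD _ hmem
      rw [map_add, _root_.map_smul, smul_eq_mul, hfα r] at h2
      have hv' : -(r ⬝ᵥ α) ≠ 0 := by linarith
      have h3 : tt * (r ⬝ᵥ α) = -(f (p₀ - xbar) - c₂ + 1) := by
        have e1 : tt * (r ⬝ᵥ α) = -((f (p₀ - xbar) - c₂ + 1) / -(r ⬝ᵥ α) * -(r ⬝ᵥ α)) := by
          rw [htt]; ring
        rw [e1, div_mul_cancel₀ _ hv']
      rw [h3] at h2
      linarith
  have hcut : ∃ v, IsVertexOf C v ∧
      v ∈ connectedComponentIn (skeleton C ∩ interior S) xbar ∧ v ⬝ᵥ α < β := by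
    exact ⟨xbar, hxbarC, hxbarComp, by rw [hβ]; linarith⟩
  have hfinal := hproper α β hfeas hcut xhat hxhat
  -- but xhat ⬝ᵥ α < β
  have hfu : f u < c₁ := hfQ u huQ
  rw [hfα, hu_def, sub_dotProduct] at hfu
  rw [hβ] at hfinal
  linarith


end
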